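/- There exist nontrivial group homomorphisms σ₃, σ₅ : Λ^{N=1} → ℤ/2 with σ₃(h) = 0, σ₃(γ) = 1, σ₃(−1) = 0, and σ₅(h) = 1, σ₅(γ) = 1, σ₅(−1) = 1. They arise as follows: there is a ring homomorphism Λ → 𝔽₉ sending ω to 1 and y to a square root of −1 generating 𝔽₉ over 𝔽₃, and a ring homomorphism Λ → 𝔽₂₅ sending ω to a primitive third root of unity and y to 0; σ₃ and σ₅ are the composites of these with the unique surjections from the norm-one subgroups of 𝔽₉ˣ (cyclic of order 4) and 𝔽₂₅ˣ (cyclic of order 6) onto ℤ/2. -/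

import Mathlib

open Quaternion

noncomputable section

set_option linter.unnecessarySeqFocus false

/-- `x = i` in `D = ℍ[ℚ, -3, 5]`. -/
def qx : ℍ[ℚ, -3, 5] := ⟨0, 1, 0, 0⟩
/-- `y = j` in `D = ℍ[ℚ, -3, 5]`. -/
def qy : ℍ[ℚ, -3, 5] := ⟨0, 0, 1, 0⟩
/-- `ω = (−1 + x)/2`. -/
def qω : ℍ[ℚ, -3, 5] := (2 : ℚ)⁻¹ • (-1 + qx)
/-- `h = 4 + x·y`. -/
def qh : ℍ[ℚ, -3, 5] := 4 + qx * qy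
/-- `γ = 4 + 5ω² − 2y`. -/
def qγ : ℍ[ℚ, -3, 5] := 4 + 5 * qω ^ 2 - 2 * qy

/-- The maximal order `Λ = ℤ⟨ω, y⟩ ⊆ D`, the subring generated by `ω` and `y`. -/
def Λ : Subring ℍ[ℚ, -3, 5] := Subring.closure {qω, qy}

lemma qω_mem : qω ∈ Λ := Subring.subset_closure (Set.mem_insert _ _)
lemma qy_mem : qy ∈ Λ := Subring.subset_closure (Set.mem_insert_of_mem _ rfl)

lemma qx_mem : qx ∈ Λ := by
  have hx : qx = qω + qω + 1 := by ext <;> simp [qω, qx] <;> norm_num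
  rw [hx]
  exact Subring.add_mem _ (Subring.add_mem _ qω_mem qω_mem) (Subring.one_mem _)

lemma qh_mem : qh ∈ Λ := by
  have h4 : (4 : ℍ[ℚ, -3, 5]) ∈ Λ := by
    have : (4 : ℍ[ℚ, -3, 5]) = ((4 : ℕ) : ℍ[ℚ, -3, 5]) := by norm_cast
    rw [this]; exact natCast_mem Λ 4
  exact Subring.add_mem _ h4 (Subring.mul_mem _ qx_mem qy_mem)

lemma qγ_mem : qγ ∈ Λ := by
  have h4 : (4 : ℍ[ℚ, -3, 5]) ∈ Λ := by
    have : (4 : ℍ[ℚ, -3, 5]) = ((4 : ℕ) : ℍ[ℚ, -3, 5]) := by norm_cast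
    rw [this]; exact natCast_mem Λ 4
  have h5 : (5 : ℍ[ℚ, -3, 5]) ∈ Λ := by
    have : (5 : ℍ[ℚ, -3, 5]) = ((5 : ℕ) : ℍ[ℚ, -3, 5]) := by norm_cast
    rw [this]; exact natCast_mem Λ 5
  have h2 : (2 : ℍ[ℚ, -3, 5]) ∈ Λ := by
    have : (2 : ℍ[ℚ, -3, 5]) = ((2 : ℕ) : ℍ[ℚ, -3, 5]) := by norm_cast
    rw [this]; exact natCast_mem Λ 2
  exact Subring.sub_mem _
    (Subring.add_mem _ h4 (Subring.mul_mem _ h5 (by rw [pow_two]; exact Subring.mul_mem _ qω_mem qω_mem)))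
    (Subring.mul_mem _ h2 qy_mem)

lemma star_mem_Λ {a : ℍ[ℚ, -3, 5]} (ha : a ∈ Λ) : star a ∈ Λ := by
  induction ha using Subring.closure_induction with
  | mem x hx =>
      rcases hx with hx | hx
      · subst hx
        have : star qω = -1 - qω := by ext <;> simp [qω, qx] <;> norm_num
        rw [this]
        exact Subring.sub_mem _ (Subring.neg_mem _ (Subring.one_mem _)) qω_mem
      · rw [Set.mem_singleton_iff] at hx
        subst hx
        have : star qy = -qy := by ext <;> simp [qy]
        rw [this]
        exact Subring.neg_mem _ qy_mem
  | zero => simpa using Subring.zero_mem Λ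
  | one => simpa using Subring.one_mem Λ
  | add x y hx hy px py => rw [star_add]; exact Subring.add_mem _ px py
  | neg x hx px => rw [star_neg]; exact Subring.neg_mem _ px
  | mul x y hx hy px py => rw [star_mul]; exact Subring.mul_mem _ py px

/-- The norm-one units `Λ^{N=1}` of the order `Λ`, as a subgroup of the unit group of `D`. -/
def N1 : Subgroup (ℍ[ℚ, -3, 5])ˣ where
  carrier := {u | (u : ℍ[ℚ, -3, 5]) ∈ Λ ∧ (u : ℍ[ℚ, -3, 5]) * star (u : ℍ[ℚ, -3, 5]) = 1}
  one_mem' := ⟨Subring.one_mem _, by simp⟩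
  mul_mem' := by
    rintro a b ⟨haΛ, ha⟩ ⟨hbΛ, hb⟩
    refine ⟨Subring.mul_mem _ haΛ hbΛ, ?_⟩
    rw [Units.val_mul, star_mul, mul_assoc, ← mul_assoc (b : ℍ[ℚ, -3, 5]), hb, one_mul, ha]
  inv_mem' := by
    rintro u ⟨huΛ, hu⟩
    have hinv : ((u⁻¹ : (ℍ[ℚ, -3, 5])ˣ) : ℍ[ℚ, -3, 5]) = star (u : ℍ[ℚ, -3, 5]) :=
      Units.inv_eq_of_mul_eq_one_right hu
    refine ⟨by rw [hinv]; exact star_mem_Λ huΛ, ?_⟩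
    rw [hinv, star_star, ← hinv, Units.inv_mul]

lemma qω_norm : qω * star qω = 1 := by ext <;> simp [qω, qx] <;> norm_num
lemma qω_norm' : star qω * qω = 1 := by ext <;> simp [qω, qx] <;> norm_num
lemma qh_norm : qh * star qh = 1 := by
  have h4 : ((4 : ℚ) : ℍ[ℚ, -3, 5]) = 4 := by norm_cast
  ext <;> simp [qh, qx, qy, ← h4, - QuaternionAlgebra.coe_ofNat] <;> norm_num
lemma qh_norm' : star qh * qh = 1 := by
  have h4 : ((4 : ℚ) : ℍ[ℚ, -3, 5]) = 4 := by norm_cast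
  ext <;> simp [qh, qx, qy, ← h4, - QuaternionAlgebra.coe_ofNat] <;> norm_num
lemma qγ_norm : qγ * star qγ = 1 := by
  have h4 : ((4 : ℚ) : ℍ[ℚ, -3, 5]) = 4 := by norm_cast
  have h5 : ((5 : ℚ) : ℍ[ℚ, -3, 5]) = 5 := by norm_cast
  have h2 : ((2 : ℚ) : ℍ[ℚ, -3, 5]) = 2 := by norm_cast
  ext <;> simp [qγ, qω, qx, qy, ← h4, ← h5, ← h2, pow_two, - QuaternionAlgebra.coe_ofNat] <;> norm_num
lemma qγ_norm' : star qγ * qγ = 1 := by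
  have h4 : ((4 : ℚ) : ℍ[ℚ, -3, 5]) = 4 := by norm_cast
  have h5 : ((5 : ℚ) : ℍ[ℚ, -3, 5]) = 5 := by norm_cast
  have h2 : ((2 : ℚ) : ℍ[ℚ, -3, 5]) = 2 := by norm_cast
  ext <;> simp [qγ, qω, qx, qy, ← h4, ← h5, ← h2, pow_two, - QuaternionAlgebra.coe_ofNat] <;> norm_num

/-- `ω` as an element of `Λ^{N=1}`. -/
def nω : N1 := ⟨⟨qω, star qω, qω_norm, qω_norm'⟩, qω_mem, qω_norm⟩
/-- `h = 4 + xy` as an element of `Λ^{N=1}`. -/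
def nh : N1 := ⟨⟨qh, star qh, qh_norm, qh_norm'⟩, qh_mem, qh_norm⟩
/-- `γ = 4 + 5ω² − 2y` as an element of `Λ^{N=1}`. -/
def nγ : N1 := ⟨⟨qγ, star qγ, qγ_norm, qγ_norm'⟩, qγ_mem, qγ_norm⟩
/-- `−1` as an element of `Λ^{N=1}`. -/
def negOne : N1 := ⟨-1, by
  refine ⟨?_, by simp⟩
  show ((-1 : (ℍ[ℚ, -3, 5])ˣ) : ℍ[ℚ, -3, 5]) ∈ Λ
  simp [Subring.neg_mem, Subring.one_mem]⟩

instance : Fact (Nat.Prime 3) := ⟨by norm_num⟩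
instance : Fact (Nat.Prime 5) := ⟨by norm_num⟩


/-!
`Λ` is the image of the `ℤ`-order `ℍ[ℤ, -1, -1, 5]` (basis `1, i, j, ij` with `i² = -1 - i`,
`j² = 5`, `ji = -j - ij`) under `i ↦ ω`, `j ↦ y`, so ring maps out of `Λ` are given by quaternion
bases of the target: in characteristic `3` take `i ↦ 1`, `j ↦ s` with `s² = -1`; in characteristic
`5` take `i ↦ t`, a primitive cube root of unity, and `j ↦ 0`. In both cases the `p`-th power
Frobenius acts on the images of `i, j, ij` as the canonical involution, so an element `u` with
`u ū = 1` is sent to a `(p + 1)`-th root of unity, and `x ↦ x ^ ((p + 1) / 2) ∈ {±1}` gives the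
sign. The values are read off from `h = 4 + j + 2ij` and `γ = -1 - 5i - 2j`.
-/

namespace QuaternionAlgebra.Basis

variable {A : Type*} [CommRing A] {c₁ c₂ c₃ : ℤ} (q : QuaternionAlgebra.Basis A c₁ c₂ c₃)

theorem lift_star_eq_pow (p : ℕ) [ExpChar A p] (hi : q.i ^ p = c₂ - q.i) (hj : q.j ^ p = -q.j)
    (hk : q.k ^ p = -q.k) (a : ℍ[ℤ,c₁,c₂,c₃]) : q.lift (star a) = q.lift a ^ p := by
  rw [← frobenius_def]
  simp only [lift, algebraMap_int_eq, eq_intCast, map_add, map_zsmul, map_intCast]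
  simp only [frobenius_def, hi, hj, hk, re_star, imI_star, imJ_star, imK_star, zsmul_eq_mul]
  push_cast
  ring

theorem lift_pow_succ_eq_one (p : ℕ) [ExpChar A p] (hi : q.i ^ p = c₂ - q.i)
    (hj : q.j ^ p = -q.j) (hk : q.k ^ p = -q.k) {a : ℍ[ℤ,c₁,c₂,c₃]} (ha : a * star a = 1) :
    q.lift a ^ (p + 1) = 1 := by
  rw [pow_succ', ← q.lift_star_eq_pow p hi hj hk, ← q.lift_mul, ha, q.lift_one]

def normOneHom (p : ℕ) [ExpChar A p] (hi : q.i ^ p = c₂ - q.i) (hj : q.j ^ p = -q.j)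
    (hk : q.k ^ p = -q.k) : unitary ℍ[ℤ,c₁,c₂,c₃] →* rootsOfUnity (p + 1) A :=
  ((Units.map q.liftHom.toMonoidHom).comp Unitary.toUnits).codRestrict _ fun u =>
    (mem_rootsOfUnity' _ _).mpr (q.lift_pow_succ_eq_one p hi hj hk (Unitary.coe_mul_star_self u))

end QuaternionAlgebra.Basis

open Classical in
/-- When `rootsOfUnity (2 * m) R` is cyclic of order `2 * m` (e.g. `R = 𝔽_q` with `2 * m ∣ q - 1`),
this is its unique surjection onto `ℤ/2`. -/
def rootsOfUnityParity (R : Type*) [CommRing R] [IsDomain R] (m : ℕ) :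
    rootsOfUnity (2 * m) R →* Multiplicative (ZMod 2) where
  toFun x := if ((x : Rˣ) : R) ^ m = 1 then 1 else Multiplicative.ofAdd 1
  map_one' := by simp
  map_mul' x y := by
    have sq_eq_one (z : rootsOfUnity (2 * m) R) : ((z : Rˣ) : R) ^ m * ((z : Rˣ) : R) ^ m = 1 := by
      rw [← pow_add, ← two_mul, ← Units.val_pow_eq_pow_val, (mem_rootsOfUnity _ _).mp z.2,
        Units.val_one]
    rcases mul_self_eq_one_iff.mp (sq_eq_one x) with hx | hx <;>
      rcases mul_self_eq_one_iff.mp (sq_eq_one y) with hy | hy <;>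
      by_cases h : (-1 : R) = 1 <;>
      simp only [Subgroup.coe_mul, Units.val_mul, mul_pow, hx, hy, h, mul_neg, mul_one, one_mul,
        neg_neg, ↓reduceIte] <;> decide

lemma rootsOfUnityParity_apply_of_pow_eq_one {R : Type*} [CommRing R] [IsDomain R] {m : ℕ}
    {x : rootsOfUnity (2 * m) R} (hx : ((x : Rˣ) : R) ^ m = 1) : rootsOfUnityParity R m x = 1 :=
  if_pos hx

lemma rootsOfUnityParity_apply_of_pow_ne_one {R : Type*} [CommRing R] [IsDomain R] {m : ℕ}
    {x : rootsOfUnity (2 * m) R} (hx : ((x : Rˣ) : R) ^ m ≠ 1) :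
    rootsOfUnityParity R m x = Multiplicative.ofAdd 1 :=
  if_neg hx

lemma adjoin_singleton_eq_top_of_finrank_eq_two {F K : Type*} [Field F] [Field K] [Algebra F K]
    (hK : Module.finrank F K = 2) {s : K} (hs : s ∉ Set.range (algebraMap F K)) :
    Algebra.adjoin F {s} = ⊤ := by
  have := Subalgebra.isSimpleOrder_of_finrank hK
  refine (eq_bot_or_eq_top _).resolve_left fun hbot => hs ?_
  exact Algebra.mem_bot.mp (hbot ▸ Algebra.self_mem_adjoin_singleton F s)

lemma exists_isPrimitiveRoot_of_dvd_card_sub_one {K : Type*} [Field K] [Finite K] (p : ℕ)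
    [Fact p.Prime] (hp : p ∣ Nat.card K - 1) : ∃ t : K, IsPrimitiveRoot t p := by
  obtain ⟨x, hx⟩ := exists_prime_orderOf_dvd_card' (G := Kˣ) p (by rwa [Nat.card_units])
  exact ⟨x, IsPrimitiveRoot.coe_units_iff.mpr (hx ▸ IsPrimitiveRoot.orderOf x)⟩

lemma IsPrimitiveRoot.sq_add_self_add_one {R : Type*} [CommRing R] [IsDomain R] {t : R}
    (ht : IsPrimitiveRoot t 3) : t ^ 2 + t + 1 = 0 := by
  have h := ht.geom_sum_eq_zero (by norm_num)
  simp only [Finset.sum_range_succ, Finset.sum_range_zero] at h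
  linear_combination h

lemma qω_eq : qω = ⟨-1 / 2, 1 / 2, 0, 0⟩ := by ext <;> simp [qω, qx] <;> norm_num

def basisΛ : QuaternionAlgebra.Basis ℍ[ℚ, -3, 5] (-1 : ℤ) (-1) 5 where
  i := qω
  j := qy
  k := qω * qy
  i_mul_i := by ext <;> simp [qω_eq] <;> norm_num
  j_mul_j := by
    ext <;> simp [qy, zsmul_eq_mul, QuaternionAlgebra.re_ofNat, QuaternionAlgebra.imI_ofNat,
      QuaternionAlgebra.imJ_ofNat, QuaternionAlgebra.imK_ofNat]
  i_mul_j := rfl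
  j_mul_i := by ext <;> simp [qω_eq, qy] <;> norm_num

lemma liftHom_basisΛ (a : ℍ[ℤ, -1, -1, 5]) :
    basisΛ.liftHom a = ⟨a.re - a.imI / 2, a.imI / 2, a.imJ - a.imK / 2, a.imK / 2⟩ := by
  ext <;> simp [QuaternionAlgebra.Basis.lift, basisΛ, qω_eq, qy] <;> ring

lemma liftHom_basisΛ_injective : Function.Injective basisΛ.liftHom := by
  refine (injective_iff_map_eq_zero _).mpr fun a ha => ?_
  rw [liftHom_basisΛ] at ha
  obtain ⟨h1, h2, h3, h4⟩ := QuaternionAlgebra.ext_iff.mp ha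
  simp only [QuaternionAlgebra.re_zero, QuaternionAlgebra.imI_zero, QuaternionAlgebra.imJ_zero,
    QuaternionAlgebra.imK_zero] at h1 h2 h3 h4
  ext <;> simp only [QuaternionAlgebra.re_zero, QuaternionAlgebra.imI_zero,
    QuaternionAlgebra.imJ_zero, QuaternionAlgebra.imK_zero] <;> qify <;> linarith

lemma liftHom_basisΛ_star (a : ℍ[ℤ, -1, -1, 5]) :
    basisΛ.liftHom (star a) = star (basisΛ.liftHom a) := by
  simp only [liftHom_basisΛ]
  ext <;> simp <;> ring

lemma liftHom_basisΛ_mem (a : ℍ[ℤ, -1, -1, 5]) : basisΛ.liftHom a ∈ Λ :=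
  add_mem (add_mem (add_mem (intCast_mem _ _) (zsmul_mem qω_mem _)) (zsmul_mem qy_mem _))
    (zsmul_mem (mul_mem qω_mem qy_mem) _)

lemma le_range_liftHom_basisΛ : Λ ≤ basisΛ.liftHom.range.toSubring := by
  refine Subring.closure_le.mpr (Set.insert_subset_iff.mpr ⟨?_, Set.singleton_subset_iff.mpr ?_⟩)
  · exact ⟨(QuaternionAlgebra.Basis.self ℤ).i, by simp [QuaternionAlgebra.Basis.lift, basisΛ]⟩
  · exact ⟨(QuaternionAlgebra.Basis.self ℤ).j, by simp [QuaternionAlgebra.Basis.lift, basisΛ]⟩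

def equivΛ : ℍ[ℤ, -1, -1, 5] ≃+* Λ :=
  RingEquiv.ofBijective (basisΛ.liftHom.toRingHom.codRestrict Λ liftHom_basisΛ_mem)
    ⟨fun _ _ h => liftHom_basisΛ_injective (congrArg Subtype.val h),
     fun d => (le_range_liftHom_basisΛ d.2).imp fun _ ha => Subtype.ext ha⟩

lemma liftHom_basisΛ_equivΛ_symm (d : Λ) : basisΛ.liftHom (equivΛ.symm d) = d :=
  congrArg Subtype.val (equivΛ.apply_symm_apply d)

lemma equivΛ_symm_eq {d : Λ} {a : ℍ[ℤ, -1, -1, 5]} (h : basisΛ.liftHom a = d) :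
    equivΛ.symm d = a :=
  equivΛ.symm_apply_eq.mpr (Subtype.ext h.symm)

lemma equivΛ_symm_mem_unitary {d : Λ} (hd : (d : ℍ[ℚ, -3, 5]) * star (d : ℍ[ℚ, -3, 5]) = 1) :
    equivΛ.symm d ∈ unitary ℍ[ℤ, -1, -1, 5] := by
  have h : equivΛ.symm d * star (equivΛ.symm d) = 1 := liftHom_basisΛ_injective <| by
    rwa [map_mul, liftHom_basisΛ_star, liftHom_basisΛ_equivΛ_symm, map_one]
  exact Unitary.mem_iff.mpr ⟨(star_comm_self' _).trans h, h⟩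

def normOneToUnitary : N1 →* unitary ℍ[ℤ, -1, -1, 5] :=
  (equivΛ.symm.toMonoidHom.comp
      (((Units.coeHom _).comp N1.subtype).codRestrict Λ.toSubmonoid fun u => u.2.1)).codRestrict
    _ fun u => equivΛ_symm_mem_unitary u.2.2

lemma equivΛ_symm_qω : equivΛ.symm ⟨qω, qω_mem⟩ = ⟨0, 1, 0, 0⟩ :=
  equivΛ_symm_eq (by rw [liftHom_basisΛ, Subtype.coe_mk, qω_eq]; norm_num)

lemma equivΛ_symm_qy : equivΛ.symm ⟨qy, qy_mem⟩ = ⟨0, 0, 1, 0⟩ :=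
  equivΛ_symm_eq (by rw [liftHom_basisΛ, Subtype.coe_mk, qy]; norm_num)

lemma equivΛ_symm_qh : equivΛ.symm ⟨qh, qh_mem⟩ = ⟨4, 0, 1, 2⟩ :=
  equivΛ_symm_eq <| by
    rw [liftHom_basisΛ]
    ext <;> simp [qh, qx, qy, QuaternionAlgebra.re_ofNat, QuaternionAlgebra.imI_ofNat,
      QuaternionAlgebra.imJ_ofNat, QuaternionAlgebra.imK_ofNat]

lemma equivΛ_symm_qγ : equivΛ.symm ⟨qγ, qγ_mem⟩ = ⟨-1, -5, -2, 0⟩ :=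
  equivΛ_symm_eq <| by
    rw [liftHom_basisΛ]
    ext <;> simp [qγ, qω_eq, qy, pow_two, QuaternionAlgebra.re_ofNat, QuaternionAlgebra.imI_ofNat,
      QuaternionAlgebra.imJ_ofNat, QuaternionAlgebra.imK_ofNat] <;> norm_num

lemma normOneToUnitary_nh : (normOneToUnitary nh : ℍ[ℤ, -1, -1, 5]) = ⟨4, 0, 1, 2⟩ :=
  equivΛ_symm_qh

lemma normOneToUnitary_nγ : (normOneToUnitary nγ : ℍ[ℤ, -1, -1, 5]) = ⟨-1, -5, -2, 0⟩ :=
  equivΛ_symm_qγ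

lemma normOneToUnitary_negOne : (normOneToUnitary negOne : ℍ[ℤ, -1, -1, 5]) = -1 :=
  equivΛ_symm_eq (by rw [map_neg, map_one]; rfl)

section Reduction

variable {A : Type*} [CommRing A]

def reduction (q : QuaternionAlgebra.Basis A (-1 : ℤ) (-1) 5) : Λ →+* A :=
  (q.liftHom : ℍ[ℤ, -1, -1, 5] →+* A).comp equivΛ.symm.toRingHom

lemma reduction_apply (q : QuaternionAlgebra.Basis A (-1 : ℤ) (-1) 5) (d : Λ) :
    reduction q d = q.lift (equivΛ.symm d) := rfl

section CharThree

variable [CharP A 3] {s : A} (hs : s ^ 2 = -1)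

def basisOfSqEqNegOne : QuaternionAlgebra.Basis A (-1 : ℤ) (-1) 5 where
  i := 1
  j := s
  k := s
  i_mul_i := by
    simp only [zsmul_eq_mul]; push_cast; linear_combination (CharP.ofNat_eq_zero A 3)
  j_mul_j := by
    simp only [zsmul_eq_mul]; push_cast; linear_combination hs - 2 * CharP.ofNat_eq_zero A 3
  i_mul_j := one_mul s
  j_mul_i := by
    simp only [zsmul_eq_mul]; push_cast; linear_combination s * CharP.ofNat_eq_zero A 3

lemma lift_basisOfSqEqNegOne (a : ℍ[ℤ, -1, -1, 5]) :
    (basisOfSqEqNegOne hs).lift a = a.re + a.imI + (a.imJ + a.imK) * s := by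
  simp only [QuaternionAlgebra.Basis.lift, basisOfSqEqNegOne, algebraMap_int_eq, eq_intCast,
    zsmul_eq_mul, mul_one]
  ring

def normOneHomOfSqEqNegOne : unitary ℍ[ℤ, -1, -1, 5] →* rootsOfUnity 4 A :=
  (basisOfSqEqNegOne hs).normOneHom 3
    (by simp only [basisOfSqEqNegOne]; push_cast; linear_combination CharP.ofNat_eq_zero A 3)
    (by simp only [basisOfSqEqNegOne]; linear_combination s * hs)
    (by simp only [basisOfSqEqNegOne]; linear_combination s * hs)

@[simp] lemma coe_normOneHomOfSqEqNegOne_apply (u : unitary ℍ[ℤ, -1, -1, 5]) :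
    ((normOneHomOfSqEqNegOne hs u : Aˣ) : A) = (basisOfSqEqNegOne hs).lift u := rfl

end CharThree

section CharFive

variable [CharP A 5] {t : A} (ht : t ^ 2 + t + 1 = 0)

def basisOfCubeRoot : QuaternionAlgebra.Basis A (-1 : ℤ) (-1) 5 where
  i := t
  j := 0
  k := 0
  i_mul_i := by simp only [zsmul_eq_mul]; push_cast; linear_combination ht
  j_mul_j := by simp [CharP.ofNat_eq_zero A 5]
  i_mul_j := mul_zero t
  j_mul_i := by simp

lemma lift_basisOfCubeRoot (a : ℍ[ℤ, -1, -1, 5]) :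
    (basisOfCubeRoot ht).lift a = a.re + a.imI * t := by
  simp [QuaternionAlgebra.Basis.lift, basisOfCubeRoot, zsmul_eq_mul]

def normOneHomOfCubeRoot : unitary ℍ[ℤ, -1, -1, 5] →* rootsOfUnity 6 A :=
  (basisOfCubeRoot ht).normOneHom 5
    (by simp only [basisOfCubeRoot]; push_cast; linear_combination (t ^ 3 - t ^ 2 + 1) * ht)
    (by simp [basisOfCubeRoot]) (by simp [basisOfCubeRoot])

@[simp] lemma coe_normOneHomOfCubeRoot_apply (u : unitary ℍ[ℤ, -1, -1, 5]) :
    ((normOneHomOfCubeRoot ht u : Aˣ) : A) = (basisOfCubeRoot ht).lift u := rfl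

end CharFive

end Reduction

lemma exists_sq_eq_neg_one_galoisField_three : ∃ s : GaloisField 3 2, s ^ 2 = -1 := by
  have := Fintype.ofFinite (GaloisField 3 2)
  obtain ⟨s, hs⟩ := (FiniteField.isSquare_neg_one_iff (F := GaloisField 3 2)).mpr <| by
    rw [← Nat.card_eq_fintype_card, GaloisField.card 3 2 two_ne_zero]; decide
  exact ⟨s, by rw [sq, hs]⟩

lemma exists_isPrimitiveRoot_three_galoisField_five : ∃ t : GaloisField 5 2, IsPrimitiveRoot t 3 :=
  exists_isPrimitiveRoot_of_dvd_card_sub_one 3 (by rw [GaloisField.card 5 2 two_ne_zero]; decide)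

theorem exists_reduction_galoisField_three {s : GaloisField 3 2} (hs : s ^ 2 = -1) :
    ∃ ρ₃ : Λ →+* GaloisField 3 2,
      ρ₃ ⟨qω, qω_mem⟩ = 1 ∧ (ρ₃ ⟨qy, qy_mem⟩) ^ 2 = -1 ∧
      Algebra.adjoin (ZMod 3) ({ρ₃ ⟨qy, qy_mem⟩} : Set (GaloisField 3 2)) = ⊤ := by
  have hω : reduction (basisOfSqEqNegOne hs) ⟨qω, qω_mem⟩ = 1 := by
    rw [reduction_apply, equivΛ_symm_qω, lift_basisOfSqEqNegOne]; norm_num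
  have hy : reduction (basisOfSqEqNegOne hs) ⟨qy, qy_mem⟩ = s := by
    rw [reduction_apply, equivΛ_symm_qy, lift_basisOfSqEqNegOne]; norm_num
  have hs_not_mem : s ∉ Set.range (algebraMap (ZMod 3) (GaloisField 3 2)) := by
    rintro ⟨c, rfl⟩
    have hc : c ^ 2 = -1 :=
      (algebraMap (ZMod 3) (GaloisField 3 2)).injective (by rwa [map_pow, map_neg, map_one])
    exact (by decide : ∀ c : ZMod 3, c ^ 2 ≠ -1) c hc
  refine ⟨_, hω, ?_, ?_⟩ <;> rw [hy]
  exacts [hs, adjoin_singleton_eq_top_of_finrank_eq_two (GaloisField.finrank 3 two_ne_zero)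
    hs_not_mem]

theorem exists_reduction_galoisField_five {t : GaloisField 5 2} (ht : IsPrimitiveRoot t 3) :
    ∃ ρ₅ : Λ →+* GaloisField 5 2, IsPrimitiveRoot (ρ₅ ⟨qω, qω_mem⟩) 3 ∧ ρ₅ ⟨qy, qy_mem⟩ = 0 := by
  refine ⟨reduction (basisOfCubeRoot ht.sq_add_self_add_one), ?_, ?_⟩
  · rw [reduction_apply, equivΛ_symm_qω, lift_basisOfCubeRoot]; simpa using ht
  · rw [reduction_apply, equivΛ_symm_qy, lift_basisOfCubeRoot]; simp

theorem exists_normOneSign_galoisField_three {s : GaloisField 3 2} (hs : s ^ 2 = -1) :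
    ∃ σ₃ : N1 →* Multiplicative (ZMod 2),
      σ₃ nh = Multiplicative.ofAdd (0 : ZMod 2) ∧ σ₃ nγ = Multiplicative.ofAdd (1 : ZMod 2) ∧
      σ₃ negOne = Multiplicative.ofAdd (0 : ZMod 2) ∧ σ₃ ≠ 1 := by
  have h3 : (3 : GaloisField 3 2) = 0 := CharP.ofNat_eq_zero _ 3
  have hγ : (rootsOfUnityParity _ 2).comp ((normOneHomOfSqEqNegOne hs).comp normOneToUnitary) nγ =
      Multiplicative.ofAdd 1 := by
    refine rootsOfUnityParity_apply_of_pow_ne_one ?_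
    rw [MonoidHom.comp_apply, coe_normOneHomOfSqEqNegOne_apply, normOneToUnitary_nγ,
      lift_basisOfSqEqNegOne]
    push_cast
    rw [show (-1 + -5 + (-2 + 0) * s : GaloisField 3 2) = s by linear_combination (-2 - s) * h3, hs]
    exact Ring.neg_one_ne_one_of_char_ne_two (by rw [ringChar.eq _ 3]; decide)
  refine ⟨_, rootsOfUnityParity_apply_of_pow_eq_one ?_, hγ,
    rootsOfUnityParity_apply_of_pow_eq_one ?_, ne_of_apply_ne (· nγ) (by rw [hγ]; decide)⟩
  · rw [MonoidHom.comp_apply, coe_normOneHomOfSqEqNegOne_apply, normOneToUnitary_nh,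
      lift_basisOfSqEqNegOne]
    push_cast
    linear_combination 9 * hs + (2 + 8 * s) * h3
  · rw [MonoidHom.comp_apply, coe_normOneHomOfSqEqNegOne_apply, normOneToUnitary_negOne,
      lift_basisOfSqEqNegOne]
    simp

theorem exists_normOneSign_galoisField_five {t : GaloisField 5 2} (ht : t ^ 2 + t + 1 = 0) :
    ∃ σ₅ : N1 →* Multiplicative (ZMod 2),
      σ₅ nh = Multiplicative.ofAdd (1 : ZMod 2) ∧ σ₅ nγ = Multiplicative.ofAdd (1 : ZMod 2) ∧
      σ₅ negOne = Multiplicative.ofAdd (1 : ZMod 2) ∧ σ₅ ≠ 1 := by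
  have h5 : (5 : GaloisField 5 2) = 0 := CharP.ofNat_eq_zero _ 5
  have parity_of_eq_neg_one {u : N1} (hu : (basisOfCubeRoot ht).lift (normOneToUnitary u) = -1) :
      (rootsOfUnityParity _ 3).comp ((normOneHomOfCubeRoot ht).comp normOneToUnitary) u =
        Multiplicative.ofAdd 1 := by
    refine rootsOfUnityParity_apply_of_pow_ne_one ?_
    rw [MonoidHom.comp_apply, coe_normOneHomOfCubeRoot_apply, hu, Odd.neg_one_pow (by decide)]
    exact Ring.neg_one_ne_one_of_char_ne_two (by rw [ringChar.eq _ 5]; decide)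
  have hγ := parity_of_eq_neg_one (u := nγ) <| by
    rw [normOneToUnitary_nγ, lift_basisOfCubeRoot]; push_cast; linear_combination -t * h5
  refine ⟨_, parity_of_eq_neg_one ?_, hγ, parity_of_eq_neg_one ?_,
    ne_of_apply_ne (· nγ) (by rw [hγ]; decide)⟩
  · rw [normOneToUnitary_nh, lift_basisOfCubeRoot]; push_cast; linear_combination h5
  · rw [normOneToUnitary_negOne, lift_basisOfCubeRoot]; simp

/-- There exist nontrivial group homomorphisms
`σ₃, σ₅ : Λ^{N=1} → ℤ/2` with `σ₃(h) = 0`, `σ₃(γ) = 1`, `σ₃(−1) = 0` and `σ₅(h) = 1`,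
`σ₅(γ) = 1`, `σ₅(−1) = 1`.  They arise from a ring homomorphism `Λ → 𝔽₉` sending `ω` to
`1` and `y` to a square root of `−1` generating `𝔽₉` over `𝔽₃`, and a ring homomorphism
`Λ → 𝔽₂₅` sending `ω` to a primitive third root of unity and `y` to `0`, composed with
the unique surjections of the norm-one subgroups of `𝔽₉ˣ` and `𝔽₂₅ˣ` onto `ℤ/2`. -/
theorem exists_level_three_five_cover_homomorphisms :
    (∃ ρ₃ : Λ →+* GaloisField 3 2,
      ρ₃ ⟨qω, qω_mem⟩ = 1 ∧ (ρ₃ ⟨qy, qy_mem⟩) ^ 2 = -1 ∧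
      Algebra.adjoin (ZMod 3) ({ρ₃ ⟨qy, qy_mem⟩} : Set (GaloisField 3 2)) = ⊤) ∧
    (∃ ρ₅ : Λ →+* GaloisField 5 2,
      IsPrimitiveRoot (ρ₅ ⟨qω, qω_mem⟩) 3 ∧ ρ₅ ⟨qy, qy_mem⟩ = 0) ∧
    (∃ σ₃ : N1 →* Multiplicative (ZMod 2),
      σ₃ nh = Multiplicative.ofAdd (0 : ZMod 2) ∧
      σ₃ nγ = Multiplicative.ofAdd (1 : ZMod 2) ∧
      σ₃ negOne = Multiplicative.ofAdd (0 : ZMod 2) ∧ σ₃ ≠ 1) ∧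
    (∃ σ₅ : N1 →* Multiplicative (ZMod 2),
      σ₅ nh = Multiplicative.ofAdd (1 : ZMod 2) ∧
      σ₅ nγ = Multiplicative.ofAdd (1 : ZMod 2) ∧
      σ₅ negOne = Multiplicative.ofAdd (1 : ZMod 2) ∧ σ₅ ≠ 1) := by
  obtain ⟨s, hs⟩ := exists_sq_eq_neg_one_galoisField_three
  obtain ⟨t, ht⟩ := exists_isPrimitiveRoot_three_galoisField_five
  exact ⟨exists_reduction_galoisField_three hs, exists_reduction_galoisField_five ht,
    exists_normOneSign_galoisField_three hs,
    exists_normOneSign_galoisField_five ht.sq_add_self_add_one⟩
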